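/- Let x₀ > 0, q > 1, and let λ₀ be the smallest λ > 0 satisfying h_q(λ) = 1. If T > 0 satisfies T < 1/(λ₀ e^{x₀+1}) and T < −(1/λ₀) log( 1 − e^{−2q(x₀+1)} ), then the initial value problem x'(t) = e^{x(t)} on [0,T] with x(0) = x₀ has a classical solution x ∈ C¹([0,T], ℝ). -/

import Mathlib

/-!
The problem is solved explicitly by `x(t) = x₀ - log (1 - t e^{x₀})`, which exists exactly for
`t < e^{-x₀}`. So it suffices that `T < e^{-x₀}`, which follows from
`T < 1/(λ₀ e^{x₀+1})` once we know `λ₀ e > 1`, and that holds because `h_q(λ) < 1` whenever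
`0 < λ ≤ 1/e`.
-/

/-- `h_q(λ) := λ e^{−λ/e} (√(4 + e^{−2λ/e}) − e^{−λ/e})^{1/q} / (2^{1/q}(1 − e^{−λ/e})^{1/(2q)})`. -/
noncomputable def hFun (q lam : ℝ) : ℝ :=
  lam * Real.exp (-(lam / Real.exp 1)) *
    ((Real.sqrt (4 + Real.exp (-(2 * lam / Real.exp 1))) - Real.exp (-(lam / Real.exp 1))) ^ (1 / q)
      / ((2:ℝ) ^ (1 / q) * (1 - Real.exp (-(lam / Real.exp 1))) ^ (1 / (2 * q))))

open Real

lemma mul_exp_neg_le_one_sub_exp_neg (s : ℝ) : s * exp (-s) ≤ 1 - exp (-s) := by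
  have h : exp s * exp (-s) = 1 := by rw [← exp_add, add_neg_cancel, exp_zero]
  nlinarith [add_one_le_exp s, exp_pos (-s)]

lemma sqrt_four_add_sq_sub_pos (u : ℝ) : 0 < √(4 + u ^ 2) - u := by
  have : |u| < √(4 + u ^ 2) := by
    rw [← sqrt_sq_eq_abs]
    exact sqrt_lt_sqrt (sq_nonneg u) (by linarith)
  linarith [le_abs_self u]

lemma sqrt_four_add_sq_sub_lt_two {u : ℝ} (hu : 0 < u) : √(4 + u ^ 2) - u < 2 := by
  have : √(4 + u ^ 2) < 2 + u := (sqrt_lt' (by linarith)).2 (by nlinarith)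
  linarith

lemma sqrt_le_rpow_one_div_two_mul {B q : ℝ} (hB0 : 0 < B) (hB1 : B ≤ 1) (hq : 1 ≤ q) :
    √B ≤ B ^ (1 / (2 * q)) := by
  rw [sqrt_eq_rpow]
  exact rpow_le_rpow_of_exponent_ge hB0 hB1 (by gcongr; linarith)

lemma hFun_lt_one {q lam : ℝ} (hq : 1 ≤ q) (h0 : 0 < lam) (h1 : lam * exp 1 ≤ 1) :
    hFun q lam < 1 := by
  set u := exp (-(lam / exp 1)) with hu
  have hu0 : 0 < u := exp_pos _
  have hu1 : u < 1 := exp_lt_one_iff.2 (by have := div_pos h0 (exp_pos 1); linarith)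
  have hu2 : exp (-(2 * lam / exp 1)) = u ^ 2 := by rw [hu, ← exp_nat_mul]; ring_nf
  set A := √(4 + u ^ 2) - u
  set B := 1 - u
  have hB0 : 0 < B := by linarith
  -- `λ u ≤ 1/e` together with `(λ/e) u ≤ 1 - u` gives `(λ u)² ≤ 1 - u`.
  have hlamu : lam * u ≤ √B := by
    refine le_sqrt_of_sq_le ?_
    have hle : lam * u * exp 1 ≤ 1 := by nlinarith
    have hsB : lam / exp 1 * u ≤ B := mul_exp_neg_le_one_sub_exp_neg _
    rw [div_mul_eq_mul_div, div_le_iff₀ (exp_pos 1)] at hsB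
    nlinarith [mul_pos h0 hu0]
  have hA : A ^ (1 / q) < 2 ^ (1 / q) :=
    rpow_lt_rpow (sqrt_four_add_sq_sub_pos u).le (sqrt_four_add_sq_sub_lt_two hu0)
      (by positivity)
  have hB : lam * u ≤ B ^ (1 / (2 * q)) :=
    hlamu.trans (sqrt_le_rpow_one_div_two_mul hB0 (by linarith) hq)
  have hFun_eq : hFun q lam = lam * u * A ^ (1 / q) / (2 ^ (1 / q) * B ^ (1 / (2 * q))) := by
    rw [hFun, hu2]; ring
  rw [hFun_eq, div_lt_one (by positivity)]
  calc lam * u * A ^ (1 / q) < lam * u * 2 ^ (1 / q) := by gcongr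
    _ ≤ B ^ (1 / (2 * q)) * 2 ^ (1 / q) := by gcongr
    _ = 2 ^ (1 / q) * B ^ (1 / (2 * q)) := mul_comm _ _

lemma one_lt_mul_exp_one_of_hFun_eq_one {q lam : ℝ} (hq : 1 ≤ q) (h0 : 0 < lam)
    (h1 : hFun q lam = 1) : 1 < lam * exp 1 := by
  by_contra! h
  exact (hFun_lt_one hq h0 h).ne h1

noncomputable def expBlowupSolution (x₀ t : ℝ) : ℝ := x₀ - log (1 - t * exp x₀)

section expBlowupSolution

variable {x₀ t : ℝ}

lemma one_sub_mul_exp_pos (ht : t < exp (-x₀)) : 0 < 1 - t * exp x₀ := by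
  have : exp (-x₀) * exp x₀ = 1 := by rw [← exp_add, neg_add_cancel, exp_zero]
  nlinarith [exp_pos x₀]

@[simp]
lemma expBlowupSolution_zero (x₀ : ℝ) : expBlowupSolution x₀ 0 = x₀ := by
  simp [expBlowupSolution]

lemma contDiffAt_expBlowupSolution {n : WithTop ℕ∞} (ht : t < exp (-x₀)) :
    ContDiffAt ℝ n (expBlowupSolution x₀) t :=
  contDiffAt_const.sub <| (contDiffAt_log.2 (one_sub_mul_exp_pos ht).ne').comp t <|
    contDiffAt_const.sub (contDiffAt_id.mul contDiffAt_const)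

lemma hasDerivAt_expBlowupSolution (ht : t < exp (-x₀)) :
    HasDerivAt (expBlowupSolution x₀) (exp (expBlowupSolution x₀ t)) t := by
  have hpos := one_sub_mul_exp_pos ht
  have h := ((((hasDerivAt_id t).mul_const (exp x₀)).const_sub 1).log hpos.ne').const_sub x₀
  unfold expBlowupSolution
  rw [exp_sub, exp_log hpos]
  simpa [neg_div] using h

end expBlowupSolution

theorem stmt_16_general (x₀ : ℝ) (q : ℝ) (hq : 1 < q)
    (lam0 : ℝ) (hlam0 : IsLeast {lam : ℝ | 0 < lam ∧ hFun q lam = 1} lam0)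
    (T : ℝ)
    (hT1 : T < 1 / (lam0 * Real.exp (x₀ + 1))) :
    ∃ x : ℝ → ℝ, ContDiffOn ℝ 1 x (Set.Icc 0 T) ∧ x 0 = x₀ ∧
      ∀ t ∈ Set.Icc (0:ℝ) T, HasDerivWithinAt x (Real.exp (x t)) (Set.Icc 0 T) t := by
  obtain ⟨⟨hlam_pos, hlam_root⟩, -⟩ := hlam0
  have hlam : 1 < lam0 * exp 1 := one_lt_mul_exp_one_of_hFun_eq_one hq.le hlam_pos hlam_root
  have hT : T < exp (-x₀) := by
    calc T < 1 / (lam0 * exp (x₀ + 1)) := hT1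
      _ = exp (-x₀) / (lam0 * exp 1) := by
        rw [exp_add, exp_neg]; field_simp
      _ < exp (-x₀) := div_lt_self (exp_pos _) hlam
  have hlt : ∀ t ∈ Set.Icc 0 T, t < exp (-x₀) := fun t ht => ht.2.trans_lt hT
  exact ⟨expBlowupSolution x₀,
    fun t ht => (contDiffAt_expBlowupSolution (hlt t ht)).contDiffWithinAt,
    expBlowupSolution_zero x₀,
    fun t ht => (hasDerivAt_expBlowupSolution (hlt t ht)).hasDerivWithinAt⟩

/-- Exponential nonlinearity: with `λ₀` the smallest positive root of
`h_q(λ) = 1`, if `T < 1/(λ₀ e^{x₀+1})` and `T < −(1/λ₀) log(1 − e^{−2q(x₀+1)})`, then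
`x' = e^x`, `x(0) = x₀` has a classical solution on `[0,T]`. -/
theorem stmt_16 (x₀ : ℝ) (hx : 0 < x₀) (q : ℝ) (hq : 1 < q)
    (lam0 : ℝ) (hlam0 : IsLeast {lam : ℝ | 0 < lam ∧ hFun q lam = 1} lam0)
    (T : ℝ) (hT : 0 < T)
    (hT1 : T < 1 / (lam0 * Real.exp (x₀ + 1)))
    (hT2 : T < -(1 / lam0) * Real.log (1 - Real.exp (-(2 * q * (x₀ + 1))))) :
    ∃ x : ℝ → ℝ, ContDiffOn ℝ 1 x (Set.Icc 0 T) ∧ x 0 = x₀ ∧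
      ∀ t ∈ Set.Icc (0:ℝ) T, HasDerivWithinAt x (Real.exp (x t)) (Set.Icc 0 T) t :=
  stmt_16_general x₀ q hq lam0 hlam0 T hT1
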